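/- Sorted ℓ₁-norm dominates the scaled ℓ₁-norm: let λ₁ ≥ λ₂ ≥ … ≥ λ_p > 0 and let J_λ be the sorted ℓ₁-norm. Then for every β ∈ ℝ^p and every S ⊆ {1,…,p} with |S| = s and r = p − s: J_λ(β) ≥ Ω̲(β) ≥ λ_p·‖β‖₁, where Ω̲(β) = Σ_{j=1}^s λ_j·|β_S|_{(j)} + Σ_{l=1}^r λ_{p−r+l}·|β_{S^c}|_{(l)}. -/

import Mathlib

open Finset

/-- `restr S b` is the vector `b_S`: coordinates in `S` kept, others set to `0`. -/
def restr {p : ℕ} (S : Finset (Fin p)) (b : Fin p → ℝ) : Fin p → ℝ :=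
  fun j => if j ∈ S then b j else 0

/-- `sortedAbs b j` is the `(j+1)`-st largest absolute value `|b|_{(j+1)}` among the entries
of `b` (the decreasing rearrangement of the absolute values of the entries of `b`). -/
noncomputable def sortedAbs {p : ℕ} (b : Fin p → ℝ) : Fin p → ℝ :=
  fun j => |b (Tuple.sort (fun i => -|b i|) j)|

/-! Concatenating the decreasing rearrangements of `|β_S|` and `|β_{Sᶜ}|` gives a vector `v`
which is itself a rearrangement of `|β|` (a vector supported on `T` has at most `#T` nonzero
sorted entries, so nothing is lost by truncating), and `Ω̲(β) = ∑ λ_j v_j`. As `λ` is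
decreasing, the rearrangement inequality bounds this by `∑ λ_j |β|_{(j)} = J_λ(β)`; as every
`λ_j ≥ λ_p` and `∑ v_j = ‖β‖₁`, it is at least `λ_p ‖β‖₁`. -/

lemma map_val_add_map_compl_val {α β : Type*} [Fintype α] [DecidableEq α] (T : Finset α)
    (f : α → β) : T.val.map f + Tᶜ.val.map f = univ.val.map f := by
  rw [← Multiset.map_add, ← filter_univ_mem T, compl_filter, filter_val, filter_val,
    Multiset.filter_add_not]

lemma exists_perm_eq_comp_of_map_univ_val_eq {α : Type*} [LinearOrder α] {n : ℕ}
    {f g : Fin n → α} (h : univ.val.map f = univ.val.map g) :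
    ∃ σ : Equiv.Perm (Fin n), f = g ∘ σ := by
  have hperm : (List.ofFn f).Perm (List.ofFn g) := by
    rw [Fin.univ_val_map, Fin.univ_val_map] at h
    exact Multiset.coe_eq_coe.mp h
  have hsorted : f ∘ Tuple.sort f = g ∘ Tuple.sort g :=
    List.ofFn_injective <| List.Perm.eq_of_sortedLE
      (Tuple.monotone_sort f).sortedLE_ofFn (Tuple.monotone_sort g).sortedLE_ofFn <|
      ((Tuple.sort f).ofFn_comp_perm f).trans (hperm.trans ((Tuple.sort g).ofFn_comp_perm g).symm)
  refine ⟨(Tuple.sort f).symm.trans (Tuple.sort g), funext fun i => ?_⟩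
  simpa using congrFun hsorted ((Tuple.sort f).symm i)

lemma map_filter_not_lt_comp_sub {α : Type*} {p : ℕ} (s : ℕ) (G : Fin p → α) :
    ({j | ¬ (j : ℕ) < s} : Finset (Fin p)).val.map
        (fun j : Fin p => G ⟨j - s, (Nat.sub_le _ _).trans_lt j.isLt⟩)
      = ({j | (j : ℕ) < p - s} : Finset (Fin p)).val.map G := by
  set e : Fin p → Fin p := fun j : Fin p => ⟨j - s, (Nat.sub_le _ _).trans_lt j.isLt⟩
  have hinj : Set.InjOn e ({j | ¬ (j : ℕ) < s} : Finset (Fin p)) := by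
    intro i hi j hj hij
    simp only [coe_filter, mem_univ, true_and, Set.mem_ofPred_eq] at hi hj
    have : (i : ℕ) - s = j - s := congrArg Fin.val hij
    omega
  have himage : ({j | ¬ (j : ℕ) < s} : Finset (Fin p)).image e
      = ({j | (j : ℕ) < p - s} : Finset (Fin p)) := by
    ext l
    simp only [mem_image, mem_filter, mem_univ, true_and, e]
    constructor
    · rintro ⟨j, hj, rfl⟩
      exact Nat.sub_lt_sub_right (not_lt.mp hj) j.isLt
    · intro hl
      exact ⟨⟨l + s, by omega⟩, by simp, Fin.ext (by simp)⟩
  rw [← himage, image_val_of_injOn hinj, Multiset.map_map]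
  rfl

section SortedAbs

variable {p : ℕ}

lemma sortedAbs_antitone (b : Fin p → ℝ) : Antitone (sortedAbs b) := fun _ _ hij =>
  neg_le_neg_iff.mp (Tuple.monotone_sort (fun i => -|b i|) hij)

lemma map_univ_val_sortedAbs (b : Fin p → ℝ) :
    univ.val.map (sortedAbs b) = univ.val.map (|b ·|) := by
  conv_rhs => rw [← Multiset.map_univ_val_equiv (Tuple.sort fun i => -|b i|), Multiset.map_map]
  rfl

lemma sortedAbs_eq_zero_of_card_le {T : Finset (Fin p)} {b : Fin p → ℝ}
    (hb : ∀ i ∉ T, b i = 0) {j : Fin p} (hj : #T ≤ j) : sortedAbs b j = 0 := by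
  by_contra hne
  have hpos : 0 < sortedAbs b j := (abs_nonneg _).lt_of_ne' hne
  have hsub : (Iic j).map (Tuple.sort fun i => -|b i|).toEmbedding ⊆ T := by
    intro x hx
    obtain ⟨i, hi, rfl⟩ := mem_map.mp hx
    by_contra hiT
    exact abs_pos.mp (hpos.trans_le (sortedAbs_antitone b (mem_Iic.mp hi))) (hb _ hiT)
  have := card_le_card hsub
  simp only [card_map, Fin.card_Iic] at this
  omega

lemma map_filter_lt_card_sortedAbs {T : Finset (Fin p)} {b : Fin p → ℝ}
    (hb : ∀ i ∉ T, b i = 0) :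
    ({j | (j : ℕ) < #T} : Finset (Fin p)).val.map (sortedAbs b) = T.val.map (|b ·|) := by
  have hsplit : ({j | (j : ℕ) < #T} : Finset (Fin p)).val.map (sortedAbs b)
      + ({j | ¬ (j : ℕ) < #T} : Finset (Fin p)).val.map (sortedAbs b)
      = T.val.map (|b ·|) + (Tᶜ).val.map (|b ·|) := by
    rw [← Multiset.map_add, filter_val, filter_val, Multiset.filter_add_not,
      map_univ_val_sortedAbs, map_val_add_map_compl_val]
  have hzero₁ :
      ∀ x ∈ ({j | ¬ (j : ℕ) < #T} : Finset (Fin p)).val.map (sortedAbs b), x = 0 := by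
    simp only [Multiset.mem_map, mem_val, mem_filter, mem_univ, true_and, not_lt]
    rintro _ ⟨j, hj, rfl⟩
    exact sortedAbs_eq_zero_of_card_le hb hj
  have hzero₂ : ∀ x ∈ (Tᶜ).val.map (|b ·|), x = 0 := by
    simp only [Multiset.mem_map, mem_val, mem_compl]
    rintro _ ⟨i, hi, rfl⟩
    rw [hb i hi, abs_zero]
  have htail : ({j | ¬ (j : ℕ) < #T} : Finset (Fin p)).val.map (sortedAbs b)
      = (Tᶜ).val.map (|b ·|) := by
    rw [Multiset.eq_replicate_of_mem hzero₁, Multiset.eq_replicate_of_mem hzero₂]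
    have hcard := card_filter_add_card_filter_not (s := univ) (p := fun j : Fin p => (j : ℕ) < #T)
    rw [Fin.card_filter_val_lt, card_univ, Fintype.card_fin] at hcard
    simp only [Multiset.card_map, card_val, card_compl, Fintype.card_fin]
    congr 1
    omega
  rwa [htail, add_left_inj] at hsplit

lemma map_filter_lt_card_sortedAbs_restr (T : Finset (Fin p)) (b : Fin p → ℝ) :
    ({j | (j : ℕ) < #T} : Finset (Fin p)).val.map (sortedAbs (restr T b))
      = T.val.map (|b ·|) := by
  refine (map_filter_lt_card_sortedAbs (b := restr T b) fun i hi => if_neg hi).trans ?_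
  exact Multiset.map_congr rfl fun i hi => by rw [restr, if_pos (mem_val.mp hi)]

lemma sum_mul_le_sum_mul_sortedAbs {w v b : Fin p → ℝ} (hw : Antitone w)
    (hv : univ.val.map v = univ.val.map (|b ·|)) :
    ∑ j, w j * v j ≤ ∑ j, w j * sortedAbs b j := by
  obtain ⟨σ, rfl⟩ :=
    exists_perm_eq_comp_of_map_univ_val_eq (hv.trans (map_univ_val_sortedAbs b).symm)
  exact (hw.monovary (sortedAbs_antitone b)).sum_mul_comp_perm_le_sum_mul

lemma mul_sum_abs_le_sum_mul {m : ℝ} {w v b : Fin p → ℝ} (hw : ∀ j, m ≤ w j)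
    (hv : univ.val.map v = univ.val.map (|b ·|)) :
    m * ∑ j, |b j| ≤ ∑ j, w j * v j := by
  have hnonneg : ∀ j, 0 ≤ v j := fun j => by
    obtain ⟨i, -, hi⟩ :=
      Multiset.mem_map.mp (hv ▸ Multiset.mem_map_of_mem v (mem_val.mpr (mem_univ j)))
    exact hi ▸ abs_nonneg _
  have hsum : ∑ j, |b j| = ∑ j, v j := by
    rw [sum_eq_multiset_sum, sum_eq_multiset_sum, hv]
  rw [hsum, mul_sum]
  exact sum_le_sum fun j _ => mul_le_mul_of_nonneg_right (hw j) (hnonneg j)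

end SortedAbs

section Split

variable {p : ℕ} (S : Finset (Fin p)) (β : Fin p → ℝ)

/-- The vector paired with `λ` in `Ω̲(β)`: `|β_S|` sorted, followed by `|β_{Sᶜ}|` sorted. -/
noncomputable def splitSortedAbs : Fin p → ℝ := fun j =>
  if (j : ℕ) < #S then sortedAbs (restr S β) j
  else sortedAbs (restr Sᶜ β) ⟨j - #S, (Nat.sub_le _ _).trans_lt j.isLt⟩

lemma map_univ_val_splitSortedAbs :
    univ.val.map (splitSortedAbs S β) = univ.val.map (|β ·|) := by
  have hhead : ({j | (j : ℕ) < #S} : Finset (Fin p)).val.map (splitSortedAbs S β)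
      = S.val.map (|β ·|) := by
    rw [← map_filter_lt_card_sortedAbs_restr S β]
    refine Multiset.map_congr rfl fun j hj => ?_
    rw [splitSortedAbs, if_pos (mem_filter.mp (mem_val.mp hj)).2]
  have htail : ({j | ¬ (j : ℕ) < #S} : Finset (Fin p)).val.map (splitSortedAbs S β)
      = Sᶜ.val.map (|β ·|) := by
    rw [← map_filter_lt_card_sortedAbs_restr Sᶜ β, card_compl, Fintype.card_fin,
      ← map_filter_not_lt_comp_sub]
    refine Multiset.map_congr rfl fun j hj => ?_
    rw [splitSortedAbs, if_neg (mem_filter.mp (mem_val.mp hj)).2]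
  rw [← map_val_add_map_compl_val S (|β ·|), ← hhead, ← htail, ← Multiset.map_add,
    filter_val, filter_val, Multiset.filter_add_not]

lemma sum_ite_add_sum_ite_eq_sum_mul_splitSortedAbs (lam : ℕ → ℝ) :
    ((∑ j : Fin p, if (j : ℕ) < #S then lam (j : ℕ) * sortedAbs (restr S β) j else 0)
        + ∑ j : Fin p, if (j : ℕ) < p - #S
            then lam (#S + (j : ℕ)) * sortedAbs (restr Sᶜ β) j else 0)
      = ∑ j : Fin p, lam j * splitSortedAbs S β j := by
  rw [← sum_filter, ← sum_filter,
    ← sum_filter_add_sum_filter_not univ fun j : Fin p => (j : ℕ) < #S]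
  congr 1
  · refine sum_congr rfl fun j hj => ?_
    rw [splitSortedAbs, if_pos (mem_filter.mp hj).2]
  · rw [sum_eq_multiset_sum, sum_eq_multiset_sum, ← map_filter_not_lt_comp_sub]
    refine congrArg _ (Multiset.map_congr rfl fun j hj => ?_)
    have hj : ¬ (j : ℕ) < #S := (mem_filter.mp (mem_val.mp hj)).2
    rw [splitSortedAbs, if_neg hj, Nat.add_sub_cancel' (not_lt.mp hj)]

end Split

theorem sorted_l1_dominates_l1_general {p : ℕ} (lam : ℕ → ℝ)
    (hmono : ∀ i j : ℕ, i ≤ j → j < p → lam j ≤ lam i)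
    (β : Fin p → ℝ) (S : Finset (Fin p)) :
    ((∑ j : Fin p, if (j : ℕ) < S.card then lam (j : ℕ) * sortedAbs (restr S β) j else 0)
        + (∑ j : Fin p, if (j : ℕ) < p - S.card
            then lam (S.card + (j : ℕ)) * sortedAbs (restr Sᶜ β) j else 0)
      ≤ ∑ j : Fin p, lam (j : ℕ) * sortedAbs β j)
    ∧ lam (p - 1) * ∑ j : Fin p, |β j|
      ≤ (∑ j : Fin p, if (j : ℕ) < S.card then lam (j : ℕ) * sortedAbs (restr S β) j else 0)
        + (∑ j : Fin p, if (j : ℕ) < p - S.card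
            then lam (S.card + (j : ℕ)) * sortedAbs (restr Sᶜ β) j else 0) := by
  rw [sum_ite_add_sum_ite_eq_sum_mul_splitSortedAbs]
  have hsplit := map_univ_val_splitSortedAbs S β
  constructor
  · exact sum_mul_le_sum_mul_sortedAbs (fun i j hij => hmono i j hij j.isLt) hsplit
  · refine mul_sum_abs_le_sum_mul (fun j => ?_) hsplit
    exact hmono j (p - 1) (Nat.le_sub_one_of_lt j.isLt) (Nat.sub_one_lt_of_lt j.isLt)

/-- **Sorted ℓ₁-norm dominates the scaled ℓ₁-norm** (Lemma 11).
With weights `λ₁ ≥ … ≥ λ_p > 0` (here `lam k` is `λ_{k+1}`), for every `β` and every `S` with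
`|S| = s`, `r = p − s`: `J_λ(β) ≥ Ω̲(β) ≥ λ_p ‖β‖₁`, where
`Ω̲(β) = ∑_{j=1}^s λ_j |β_S|_{(j)} + ∑_{l=1}^r λ_{p−r+l} |β_{Sᶜ}|_{(l)}`. -/
theorem sorted_l1_dominates_l1 {p : ℕ} (lam : ℕ → ℝ)
    (hmono : ∀ i j : ℕ, i ≤ j → j < p → lam j ≤ lam i)
    (hpos : ∀ j : ℕ, j < p → 0 < lam j)
    (β : Fin p → ℝ) (S : Finset (Fin p)) :
    ((∑ j : Fin p, if (j : ℕ) < S.card then lam (j : ℕ) * sortedAbs (restr S β) j else 0)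
        + (∑ j : Fin p, if (j : ℕ) < p - S.card
            then lam (S.card + (j : ℕ)) * sortedAbs (restr Sᶜ β) j else 0)
      ≤ ∑ j : Fin p, lam (j : ℕ) * sortedAbs β j)
    ∧ lam (p - 1) * ∑ j : Fin p, |β j|
      ≤ (∑ j : Fin p, if (j : ℕ) < S.card then lam (j : ℕ) * sortedAbs (restr S β) j else 0)
        + (∑ j : Fin p, if (j : ℕ) < p - S.card
            then lam (S.card + (j : ℕ)) * sortedAbs (restr Sᶜ β) j else 0) :=
  sorted_l1_dominates_l1_general lam hmono β S
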